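/- arXiv:2504.06838 — 2 statements merged into one kernel-verified Lean document; each statement's English description precedes it below -/
import Mathlib

section
/- Let z be a random vector in R^d (d ≥ 2) with i.i.d. coordinates equal to ±a with probability 1/2 (a > 0), let g ∈ R^d be a nonzero fixed vector, and let ĝ = (z^{-1})(zᵀ g). Then the trace of the covariance matrix of ĝ equals (d − 1)‖g‖², i.e. E[‖ĝ − g‖²] = (d − 1)‖g‖². -/
/-!
Since every coordinate satisfies `z i ^ 2 = a ^ 2`, we have `1 / z i = z i / a ^ 2`, and expanding
the squares with `S = ∑ j, z j * g j` gives, pointwise,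
`∑ i, (S / z i - g i) ^ 2 = (d - 2) * S ^ 2 / a ^ 2 + ‖g‖ ^ 2`.
The coordinates are centred, independent and of variance `a ^ 2`, so `E[S ^ 2] = a ^ 2 * ‖g‖ ^ 2`,
and the expectation is `(d - 2) * ‖g‖ ^ 2 + ‖g‖ ^ 2`.
-/

open MeasureTheory ProbabilityTheory
open scoped ENNReal

noncomputable def scaledRademacher (a : ℝ) : Measure ℝ :=
  (1 / 2 : ℝ≥0∞) • Measure.dirac a + (1 / 2 : ℝ≥0∞) • Measure.dirac (-a)

instance (a : ℝ) : IsProbabilityMeasure (scaledRademacher a) :=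
  ⟨by simp [scaledRademacher, ENNReal.inv_two_add_inv_two]⟩

lemma ae_sq_eq_scaledRademacher (a : ℝ) : ∀ᵐ x ∂(scaledRademacher a), x ^ 2 = a ^ 2 := by
  simp [scaledRademacher]

lemma integral_id_scaledRademacher (a : ℝ) : ∫ x, x ∂(scaledRademacher a) = 0 := by
  rw [scaledRademacher, integral_add_measure, integral_smul_measure, integral_smul_measure,
    integral_dirac, integral_dirac]
  · simp
  all_goals exact (integrable_dirac enorm_lt_top).smul_measure (by simp)

lemma variance_id_scaledRademacher (a : ℝ) : Var[id; scaledRademacher a] = a ^ 2 := by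
  rw [variance_of_integral_eq_zero aemeasurable_id (integral_id_scaledRademacher a)]
  change ∫ x, x ^ 2 ∂scaledRademacher a = a ^ 2
  rw [integral_congr_ae (ae_sq_eq_scaledRademacher a)]
  simp

lemma sum_sq_div_sub_eq_of_sq_eq {ι : Type*} [Fintype ι] {a : ℝ} (ha : a ≠ 0) {z : ι → ℝ}
    (hz : ∀ i, z i ^ 2 = a ^ 2) (g : ι → ℝ) :
    ∑ i, ((∑ j, z j * g j) / z i - g i) ^ 2
      = (Fintype.card ι - 2) / a ^ 2 * (∑ j, z j * g j) ^ 2 + ∑ i, g i ^ 2 := by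
  set S := ∑ j, z j * g j
  have hterm : ∀ i,
      (S / z i - g i) ^ 2 = S ^ 2 / a ^ 2 - 2 * S * (z i * g i) / a ^ 2 + g i ^ 2 := by
    intro i
    have hzi : z i ≠ 0 := fun h => pow_ne_zero 2 ha (by rw [← hz i, h]; ring)
    field_simp
    linear_combination (2 * S * z i * g i - S ^ 2) * hz i
  simp only [hterm, Finset.sum_add_distrib, Finset.sum_sub_distrib, ← Finset.sum_div,
    ← Finset.mul_sum, Finset.sum_const, Finset.card_univ, nsmul_eq_mul]
  field_simp
  ring

namespace ProbabilityTheory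

variable {Ω : Type*} [MeasurableSpace Ω] {P : Measure Ω} {X : Ω → ℝ} {a : ℝ}

lemma hasLaw_scaledRademacher_of_map_eq (h : P.map X = scaledRademacher a) :
    HasLaw X (scaledRademacher a) P :=
  ⟨.of_map_ne_zero (h ▸ IsProbabilityMeasure.ne_zero _), h⟩

lemma HasLaw.ae_sq_eq_of_scaledRademacher (hX : HasLaw X (scaledRademacher a) P) :
    ∀ᵐ ω ∂P, X ω ^ 2 = a ^ 2 :=
  (hX.ae_iff (p := fun x => x ^ 2 = a ^ 2) (by fun_prop)).2 (ae_sq_eq_scaledRademacher a)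

lemma HasLaw.memLp_of_scaledRademacher (hX : HasLaw X (scaledRademacher a) P) (p : ℝ≥0∞) :
    MemLp X p P := by
  have := hX.isProbabilityMeasure
  refine .of_bound hX.aemeasurable.aestronglyMeasurable |a| ?_
  filter_upwards [hX.ae_sq_eq_of_scaledRademacher] with ω hω
  exact (sq_eq_sq_iff_abs_eq_abs _ _).1 hω |>.le

lemma HasLaw.integral_eq_zero_of_scaledRademacher (hX : HasLaw X (scaledRademacher a) P) :
    P[X] = 0 :=
  hX.integral_eq.trans (integral_id_scaledRademacher a)

lemma HasLaw.variance_eq_sq_of_scaledRademacher (hX : HasLaw X (scaledRademacher a) P) :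
    Var[X; P] = a ^ 2 :=
  hX.variance_eq.trans (variance_id_scaledRademacher a)

lemma integral_sq_sum_mul_of_indepFun [IsFiniteMeasure P] {ι : Type*} [Fintype ι]
    {X : ι → Ω → ℝ} (hX : ∀ i, MemLp (X i) 2 P) (hmean : ∀ i, P[X i] = 0)
    (hind : Pairwise fun i j => X i ⟂ᵢ[P] X j) (c : ι → ℝ) :
    ∫ ω, (∑ i, X i ω * c i) ^ 2 ∂P = ∑ i, c i ^ 2 * Var[X i; P] := by
  set Y : ι → Ω → ℝ := fun i ω => X i ω * c i
  have hY : ∀ i, MemLp (Y i) 2 P := fun i => (hX i).mul_const (c i)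
  have hsum : (fun ω => ∑ i, X i ω * c i) = ∑ i, Y i := by ext; simp [Y]
  have hmean_sum : P[∑ i, Y i] = 0 := by
    rw [← hsum, integral_finsetSum _ fun i _ => (hY i).integrable one_le_two]
    simp [Y, integral_mul_const, hmean]
  have hindY : Set.Pairwise (Finset.univ : Finset ι) fun i j => Y i ⟂ᵢ[P] Y j :=
    fun i _ j _ hij => (hind hij).comp (measurable_mul_const (c i)) (measurable_mul_const (c j))
  calc ∫ ω, (∑ i, X i ω * c i) ^ 2 ∂P = Var[∑ i, Y i; P] := by
        rw [variance_of_integral_eq_zero (memLp_finsetSum' _ fun i _ => hY i).aemeasurable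
          hmean_sum, ← hsum]
    _ = ∑ i, Var[Y i; P] := IndepFun.variance_sum (fun i _ => hY i) hindY
    _ = ∑ i, c i ^ 2 * Var[X i; P] := by
      simp only [Y, variance_mul_const, mul_comm]

end ProbabilityTheory

theorem stmt_6_general {Ω : Type*} [MeasureSpace Ω] [IsProbabilityMeasure (ℙ : Measure Ω)]
    {d : ℕ} (a : ℝ) (ha : 0 < a) (z : Ω → Fin d → ℝ)
    (g : Fin d → ℝ)
    (hindep : iIndepFun (fun i ω => z ω i) ℙ)
    (hdist : ∀ i, Measure.map (fun ω => z ω i) ℙ =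
      (1 / 2 : ℝ≥0∞) • Measure.dirac a + (1 / 2 : ℝ≥0∞) • Measure.dirac (-a)) :
    ∫ ω, ∑ i, ((∑ j, z ω j * g j) / z ω i - g i) ^ 2 ∂ℙ
      = ((d : ℝ) - 1) * ∑ i, g i ^ 2 := by
  have hlaw i : HasLaw (fun ω => z ω i) (scaledRademacher a) ℙ :=
    hasLaw_scaledRademacher_of_map_eq (hdist i)
  have hmemLp i : MemLp (fun ω => z ω i) 2 ℙ := (hlaw i).memLp_of_scaledRademacher 2
  have hsq : ∀ᵐ ω ∂ℙ, ∀ i, z ω i ^ 2 = a ^ 2 :=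
    ae_all_iff.2 fun i => (hlaw i).ae_sq_eq_of_scaledRademacher
  have hS : ∫ ω, (∑ j, z ω j * g j) ^ 2 ∂ℙ = a ^ 2 * ∑ j, g j ^ 2 := by
    rw [integral_sq_sum_mul_of_indepFun hmemLp
      (fun i => (hlaw i).integral_eq_zero_of_scaledRademacher)
      (fun i j hij => hindep.indepFun hij) g, Finset.mul_sum]
    simp only [(hlaw _).variance_eq_sq_of_scaledRademacher, mul_comm]
  have hint : Integrable (fun ω => (∑ j, z ω j * g j) ^ 2) ℙ :=
    (memLp_finsetSum _ fun i _ => (hmemLp i).mul_const (g i)).integrable_sq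
  rw [integral_congr_ae (hsq.mono fun ω hω => sum_sq_div_sub_eq_of_sq_eq ha.ne' hω g),
    integral_add (hint.const_mul _) (integrable_const _), integral_const_mul, hS]
  simp only [integral_const, probReal_univ, one_smul, Fintype.card_fin]
  field_simp
  ring

/-- Variance of the single-sample SPSA estimator: E[‖ĝ − g‖²] = (d − 1) ‖g‖². -/
theorem stmt_6 {Ω : Type*} [MeasureSpace Ω] [IsProbabilityMeasure (ℙ : Measure Ω)]
    {d : ℕ} (hd : 2 ≤ d) (a : ℝ) (ha : 0 < a) (z : Ω → Fin d → ℝ)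
    (g : Fin d → ℝ) (hg : g ≠ 0)
    (hmeas : ∀ i, Measurable fun ω => z ω i)
    (hindep : iIndepFun (fun i ω => z ω i) ℙ)
    (hdist : ∀ i, Measure.map (fun ω => z ω i) ℙ =
      (1 / 2 : ℝ≥0∞) • Measure.dirac a + (1 / 2 : ℝ≥0∞) • Measure.dirac (-a)) :
    ∫ ω, ∑ i, ((∑ j, z ω j * g j) / z ω i - g i) ^ 2 ∂ℙ
      = ((d : ℝ) - 1) * ∑ i, g i ^ 2 :=
  stmt_6_general a ha z g hindep hdist
end

section
/- Let z₁, ..., z_N be independent random vectors in R^d, each with i.i.d. ±a coordinates (probability 1/2 each, a > 0), let g ∈ R^d be fixed, and define ĝ = (1/N) Σ_{n=1}^N (z_n^{-1})(z_nᵀ g). Then E[‖ĝ − g‖²] = ((d − 1)/N)‖g‖². -/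
open MeasureTheory ProbabilityTheory Finset
open scoped ENNReal

/-!
Every coordinate is `±a`, so `1 / z n i = z n i / a ^ 2`, and the `i`-th coordinate of `ĝ - g`
is `(N a²)⁻¹ ∑_{n, j ≠ i} g j · z n i · z n j`. These products are orthogonal in `L²` with
squared norm `a⁴`: within one sample the common factor `(z n i)² = a²` drops out and two distinct
independent centred coordinates remain; across samples the two pairs are independent and each
pair has mean zero. Pythagoras gives `E (ĝ i - g i)² = (N a²)⁻² · N a⁴ ∑_{j ≠ i} (g j)²`, and
summing over `i` gives `((d - 1) / N) ‖g‖²`.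
-/

noncomputable def symmTwoPoint (a : ℝ) : Measure ℝ :=
  (1 / 2 : ℝ≥0∞) • Measure.dirac a + (1 / 2 : ℝ≥0∞) • Measure.dirac (-a)

instance (a : ℝ) : IsProbabilityMeasure (symmTwoPoint a) :=
  ⟨by simp [symmTwoPoint, ENNReal.inv_two_add_inv_two]⟩

lemma ae_sq_eq_symmTwoPoint (a : ℝ) : ∀ᵐ x ∂symmTwoPoint a, x ^ 2 = a ^ 2 := by
  simp [symmTwoPoint]

lemma integral_id_symmTwoPoint (a : ℝ) : ∫ x, x ∂symmTwoPoint a = 0 := by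
  have hint : ∀ b : ℝ, Integrable (fun x : ℝ => x) ((1 / 2 : ℝ≥0∞) • Measure.dirac b) :=
    fun b => (integrable_dirac (by simp)).smul_measure (by norm_num)
  rw [symmTwoPoint, integral_add_measure (hint a) (hint (-a)), integral_smul_measure,
    integral_smul_measure, integral_dirac, integral_dirac]
  norm_num

section SymmTwoPointLaw

variable {Ω : Type*} [MeasurableSpace Ω] {μ : Measure Ω} {X Y : Ω → ℝ} {a : ℝ}

lemma aemeasurable_of_map_eq_symmTwoPoint (hX : μ.map X = symmTwoPoint a) : AEMeasurable X μ :=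
  .of_map_ne_zero (by rw [hX]; exact IsProbabilityMeasure.ne_zero _)

lemma ae_sq_eq_of_map_eq_symmTwoPoint (hX : μ.map X = symmTwoPoint a) :
    ∀ᵐ ω ∂μ, X ω ^ 2 = a ^ 2 :=
  ae_of_ae_map (aemeasurable_of_map_eq_symmTwoPoint hX) (hX ▸ ae_sq_eq_symmTwoPoint a)

lemma integral_eq_zero_of_map_eq_symmTwoPoint (hX : μ.map X = symmTwoPoint a) :
    ∫ ω, X ω ∂μ = 0 := by
  rw [← integral_id_symmTwoPoint a, ← hX]
  exact (integral_map (aemeasurable_of_map_eq_symmTwoPoint hX) aestronglyMeasurable_id).symm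

lemma ae_sq_mul_eq_of_map_eq_symmTwoPoint (hX : μ.map X = symmTwoPoint a)
    (hY : μ.map Y = symmTwoPoint a) : ∀ᵐ ω ∂μ, (X ω * Y ω) ^ 2 = a ^ 4 := by
  filter_upwards [ae_sq_eq_of_map_eq_symmTwoPoint hX, ae_sq_eq_of_map_eq_symmTwoPoint hY]
    with ω hXω hYω
  rw [mul_pow, hXω, hYω]
  ring

lemma memLp_mul_of_map_eq_symmTwoPoint [IsFiniteMeasure μ] (hX : μ.map X = symmTwoPoint a)
    (hY : μ.map Y = symmTwoPoint a) : MemLp (fun ω => X ω * Y ω) 2 μ := by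
  refine MemLp.of_bound (((aemeasurable_of_map_eq_symmTwoPoint hX).mul
    (aemeasurable_of_map_eq_symmTwoPoint hY)).aestronglyMeasurable) (a ^ 2) ?_
  filter_upwards [ae_sq_mul_eq_of_map_eq_symmTwoPoint hX hY] with ω hω
  rw [Real.norm_eq_abs, (sq_eq_sq_iff_abs_eq_abs _ (a ^ 2)).mp (by linear_combination hω),
    abs_sq]

end SymmTwoPointLaw

section Independent

variable {Ω ι : Type*} [MeasurableSpace Ω] {μ : Measure Ω} {X : ι → Ω → ℝ} {a : ℝ}

lemma integral_mul_eq_zero_of_ne (hindep : iIndepFun X μ)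
    (hX : ∀ p, μ.map (X p) = symmTwoPoint a) {p q : ι} (hpq : p ≠ q) :
    ∫ ω, X p ω * X q ω ∂μ = 0 := by
  have := (hindep.indepFun hpq).integral_mul_eq_mul_integral
    (aemeasurable_of_map_eq_symmTwoPoint (hX p)).aestronglyMeasurable
    (aemeasurable_of_map_eq_symmTwoPoint (hX q)).aestronglyMeasurable
  rw [Pi.mul_def] at this
  rw [this, integral_eq_zero_of_map_eq_symmTwoPoint (hX p), zero_mul]

lemma integral_mul_mul_mul_eq_zero (hindep : iIndepFun X μ)
    (hX : ∀ p, μ.map (X p) = symmTwoPoint a) {p q r s : ι} (hpq : p ≠ q)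
    (hpr : p ≠ r) (hps : p ≠ s) (hqr : q ≠ r) (hqs : q ≠ s) :
    ∫ ω, X p ω * X q ω * (X r ω * X s ω) ∂μ = 0 := by
  have hmeas := fun p => aemeasurable_of_map_eq_symmTwoPoint (hX p)
  have hmul : Measurable fun v : ℝ × ℝ => v.1 * v.2 := by fun_prop
  have hpairs := (hindep.indepFun_prodMk_prodMk₀ hmeas p q r s hpr hps hqr hqs).comp₀
    ((hmeas p).prodMk (hmeas q)) ((hmeas r).prodMk (hmeas s)) hmul.aemeasurable hmul.aemeasurable
  have := hpairs.integral_mul_eq_mul_integral ((hmeas p).mul (hmeas q)).aestronglyMeasurable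
    ((hmeas r).mul (hmeas s)).aestronglyMeasurable
  simp only [Pi.mul_def, Function.comp_apply] at this
  rw [this, integral_mul_eq_zero_of_ne hindep hX hpq, zero_mul]

end Independent

lemma integral_sq_sum_of_orthogonal {Ω ι : Type*} [MeasurableSpace Ω] {μ : Measure Ω}
    (s : Finset ι) (Y : ι → Ω → ℝ) (c : ι → ℝ) (hY : ∀ p ∈ s, MemLp (Y p) 2 μ)
    (horth : ∀ p ∈ s, ∀ q ∈ s, p ≠ q → ∫ ω, Y p ω * Y q ω ∂μ = 0) :
    ∫ ω, (∑ p ∈ s, c p * Y p ω) ^ 2 ∂μ = ∑ p ∈ s, c p ^ 2 * ∫ ω, Y p ω ^ 2 ∂μ := by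
  have hint : ∀ p ∈ s, ∀ q ∈ s, Integrable (fun ω => c p * Y p ω * (c q * Y q ω)) μ := by
    intro p hp q hq
    refine (((hY p hp).integrable_mul (hY q hq)).const_mul (c p * c q)).congr
      (.of_forall fun ω => ?_)
    simp only [Pi.mul_apply]
    ring
  have hcross : ∀ p q,
      ∫ ω, c p * Y p ω * (c q * Y q ω) ∂μ = c p * c q * ∫ ω, Y p ω * Y q ω ∂μ := by
    intro p q
    rw [← integral_const_mul]
    congr 1 with ω
    ring
  simp_rw [sq, sum_mul_sum]
  rw [integral_finsetSum _ fun p hp => integrable_finsetSum _ fun q hq => hint p hp q hq]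
  refine sum_congr rfl fun p hp => ?_
  rw [integral_finsetSum _ fun q hq => hint p hp q hq, sum_eq_single_of_mem p hp
    fun q hq hqp => by rw [hcross, horth p hp q hq hqp.symm, mul_zero], hcross]

lemma one_div_mul_sum_div_sub_eq {N d : ℕ} (hN : N ≠ 0) {a : ℝ} (ha : a ≠ 0)
    (x : Fin N × Fin d → ℝ) (g : Fin d → ℝ) (i : Fin d) (hx : ∀ n, x (n, i) ^ 2 = a ^ 2) :
    (1 / N : ℝ) * (∑ n, (∑ j, x (n, j) * g j) / x (n, i)) - g i
      = (N * a ^ 2)⁻¹ * ∑ p ∈ univ ×ˢ univ.erase i, g p.2 * (x (p.1, i) * x p) := by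
  have hrow : ∀ n, (∑ j, x (n, j) * g j) / x (n, i)
      = g i + (∑ j ∈ univ.erase i, g j * (x (n, i) * x (n, j))) / a ^ 2 := by
    intro n
    have hxi : x (n, i) ≠ 0 := by
      rintro h
      simpa [h, eq_comm, ha] using hx n
    rw [← add_sum_erase _ _ (mem_univ i)]
    have hfactor : ∑ j ∈ univ.erase i, g j * (x (n, i) * x (n, j))
        = x (n, i) * ∑ j ∈ univ.erase i, x (n, j) * g j := by
      rw [mul_sum]; exact sum_congr rfl fun j _ => by ring
    rw [hfactor]
    field_simp
    linear_combination (-∑ j ∈ univ.erase i, x (n, j) * g j) * hx n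
  rw [sum_product, sum_congr rfl fun n _ => hrow n, sum_add_distrib, ← sum_div, sum_const,
    card_univ, Fintype.card_fin, nsmul_eq_mul]
  field_simp
  ring

section Estimator

variable {Ω : Type*} [MeasurableSpace Ω] {μ : Measure Ω} {N d : ℕ} {a : ℝ}
  {X : Fin N × Fin d → Ω → ℝ}

lemma integral_mul_offDiag_eq_zero (hindep : iIndepFun X μ)
    (hX : ∀ p, μ.map (X p) = symmTwoPoint a) (i : Fin d) {p q : Fin N × Fin d}
    (hp : p.2 ≠ i) (hq : q.2 ≠ i) (hpq : p ≠ q) :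
    ∫ ω, X (p.1, i) ω * X p ω * (X (q.1, i) ω * X q ω) ∂μ = 0 := by
  obtain ⟨n, j⟩ := p
  obtain ⟨m, k⟩ := q
  by_cases hnm : n = m
  · subst hnm
    calc ∫ ω, X (n, i) ω * X (n, j) ω * (X (n, i) ω * X (n, k) ω) ∂μ
        = ∫ ω, a ^ 2 * (X (n, j) ω * X (n, k) ω) ∂μ := by
          refine integral_congr_ae ?_
          filter_upwards [ae_sq_eq_of_map_eq_symmTwoPoint (hX (n, i))] with ω hω
          rw [← hω]
          ring
      _ = 0 := by rw [integral_const_mul, integral_mul_eq_zero_of_ne hindep hX hpq, mul_zero]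
  · exact integral_mul_mul_mul_eq_zero hindep hX (by simpa [eq_comm] using hp)
      (by simp [hnm]) (by simp [hnm]) (by simp [hnm]) (by simp [hnm])

lemma integral_sq_sum_offDiag [IsProbabilityMeasure μ] (hindep : iIndepFun X μ)
    (hX : ∀ p, μ.map (X p) = symmTwoPoint a) (g : Fin d → ℝ) (i : Fin d) :
    ∫ ω, (∑ p ∈ univ ×ˢ univ.erase i, g p.2 * (X (p.1, i) ω * X p ω)) ^ 2 ∂μ
      = N * a ^ 4 * (∑ j, g j ^ 2 - g i ^ 2) := by
  have hsq : ∀ p : Fin N × Fin d, ∫ ω, (X (p.1, i) ω * X p ω) ^ 2 ∂μ = a ^ 4 := fun p => by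
    rw [integral_congr_ae (ae_sq_mul_eq_of_map_eq_symmTwoPoint (hX _) (hX p)), integral_const,
      probReal_univ, one_smul]
  rw [integral_sq_sum_of_orthogonal _ _ _
    (fun p _ => memLp_mul_of_map_eq_symmTwoPoint (hX _) (hX p)) fun p hp q hq hpq =>
      integral_mul_offDiag_eq_zero hindep hX i (mem_erase.mp (mem_product.mp hp).2).1
        (mem_erase.mp (mem_product.mp hq).2).1 hpq]
  simp_rw [hsq]
  rw [← sum_mul, sum_product]
  simp only [sum_const, card_univ, Fintype.card_fin, nsmul_eq_mul, sum_erase_eq_sub (mem_univ i)]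
  ring

end Estimator

theorem stmt_7_general {Ω : Type*} [MeasureSpace Ω] [IsProbabilityMeasure (ℙ : Measure Ω)]
    {d N : ℕ} (hN : 0 < N) (a : ℝ) (ha : 0 < a)
    (z : Fin N → Ω → Fin d → ℝ) (g : Fin d → ℝ)
    (hindep : iIndepFun
      (fun (p : Fin N × Fin d) ω => z p.1 ω p.2) ℙ)
    (hdist : ∀ n i, Measure.map (fun ω => z n ω i) ℙ =
      (1 / 2 : ℝ≥0∞) • Measure.dirac a + (1 / 2 : ℝ≥0∞) • Measure.dirac (-a)) :
    ∫ ω, ∑ i, ((1 / N : ℝ) * (∑ n, (∑ j, z n ω j * g j) / z n ω i) - g i) ^ 2 ∂ℙ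
      = (((d : ℝ) - 1) / N) * ∑ i, g i ^ 2 := by
  set X : Fin N × Fin d → Ω → ℝ := fun p ω => z p.1 ω p.2
  have hX : ∀ p, (ℙ : Measure Ω).map (X p) = symmTwoPoint a := fun p => hdist p.1 p.2
  have hsq : ∀ᵐ ω ∂ℙ, ∀ p, X p ω ^ 2 = a ^ 2 :=
    ae_all_iff.2 fun p => ae_sq_eq_of_map_eq_symmTwoPoint (hX p)
  have hmemLp : ∀ i, MemLp (fun ω => ∑ p ∈ univ ×ˢ univ.erase i, g p.2 * (X (p.1, i) ω * X p ω))
      2 ℙ := fun i =>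
    memLp_finsetSum _ fun p _ => (memLp_mul_of_map_eq_symmTwoPoint (hX _) (hX p)).const_mul _
  calc ∫ ω, ∑ i, ((1 / N : ℝ) * (∑ n, (∑ j, z n ω j * g j) / z n ω i) - g i) ^ 2 ∂ℙ
      = ∫ ω, ∑ i, ((N * a ^ 2)⁻¹) ^ 2
          * (∑ p ∈ univ ×ˢ univ.erase i, g p.2 * (X (p.1, i) ω * X p ω)) ^ 2 ∂ℙ := by
        refine integral_congr_ae ?_
        filter_upwards [hsq] with ω hω
        refine sum_congr rfl fun i _ => ?_
        rw [← mul_pow]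
        exact congrArg (· ^ 2) <|
          one_div_mul_sum_div_sub_eq hN.ne' ha.ne' (fun p => X p ω) g i fun n => hω (n, i)
    _ = ∑ i, ((N * a ^ 2)⁻¹) ^ 2 * (N * a ^ 4 * (∑ j, g j ^ 2 - g i ^ 2)) := by
        rw [integral_finsetSum _ fun i _ => ((hmemLp i).integrable_sq).const_mul _]
        refine sum_congr rfl fun i _ => ?_
        rw [integral_const_mul, integral_sq_sum_offDiag hindep hX]
    _ = (((d : ℝ) - 1) / N) * ∑ i, g i ^ 2 := by
        rw [← mul_sum, ← mul_sum, sum_sub_distrib, sum_const, card_univ, Fintype.card_fin,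
          nsmul_eq_mul]
        field_simp

/-- Variance of the N-sample SPSA estimator: E[‖ĝ − g‖²] = ((d − 1)/N) ‖g‖². -/
theorem stmt_7 {Ω : Type*} [MeasureSpace Ω] [IsProbabilityMeasure (ℙ : Measure Ω)]
    {d N : ℕ} (hN : 0 < N) (a : ℝ) (ha : 0 < a)
    (z : Fin N → Ω → Fin d → ℝ) (g : Fin d → ℝ)
    (hmeas : ∀ n i, Measurable fun ω => z n ω i)
    (hindep : iIndepFun
      (fun (p : Fin N × Fin d) ω => z p.1 ω p.2) ℙ)
    (hdist : ∀ n i, Measure.map (fun ω => z n ω i) ℙ =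
      (1 / 2 : ℝ≥0∞) • Measure.dirac a + (1 / 2 : ℝ≥0∞) • Measure.dirac (-a)) :
    ∫ ω, ∑ i, ((1 / N : ℝ) * (∑ n, (∑ j, z n ω j * g j) / z n ω i) - g i) ^ 2 ∂ℙ
      = (((d : ℝ) - 1) / N) * ∑ i, g i ^ 2 :=
  stmt_7_general hN a ha z g hindep hdist
end
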